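/- arXiv:1001.3084 — 3 statements merged into one kernel-verified Lean document; each statement's English description precedes it below -/
import Mathlib

section
/- Let r ∈ ℕ, r ≥ 1, and let L be a loss function satisfying Assumptions 1, 2 and 3. Let g : {r, r+1, …} → (0,∞) be such that Ω := lim_{n→∞} n·g(n) exists, is finite and nonzero. Then the risk η(p) = Σ_{n=r}^∞ f(n) L(g(n)/p) of the non-randomized estimator p̂ = g(N) converges as p → 0⁺, and lim_{p→0⁺} η(p) = η̄(Ω) = ∫₀^∞ φ(ν) L(Ω/ν) dν. -/
/-!
Write `n = ⌊ν / p⌋`. The risk `η(p)` is the integral over `ν > 0` of the step function equal to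
`f(n) L(g(n)/p) / p` on `[p n, p (n + 1))`. As `p → 0⁺` we have `p n → ν`, hence
`f(n) / p → φ(ν)` (the negative binomial law, rescaled by `p`, tends to the Gamma law) and
`g(n) / p = n g(n) / (p n) → Ω / ν`; so the step function tends to `φ(ν) L(Ω/ν)` wherever `L` is
continuous at `Ω / ν`, which by Assumption 2 is almost everywhere. Assumptions 1 and 3 give
`L(x) ≤ C (x^a + x^b)` with `a ≤ 0 ≤ b < r`; together with `f(n) / p ≤ e^(r+1) φ(ν)` this
dominates the step function by a multiple of `φ(ν) (ν^(-a) + ν^(-b))`, which is integrable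
(a sum of Gamma integrands), and dominated convergence concludes.
-/

open MeasureTheory Filter Set Topology Asymptotics
open scoped ENNReal NNReal BigOperators

/-- `φ(ν) = ν^(r-1) e^(-ν) / (r-1)!`. -/
noncomputable def phi (r : ℕ) (ν : ℝ) : ℝ :=
  ν ^ (r - 1) * Real.exp (-ν) / (Nat.factorial (r - 1))

/-- Probability function of inverse binomial sampling:
`f(n) = ((n-1)(n-2)⋯(n-r+1)/(r-1)!) p^r (1-p)^(n-r)`. -/
noncomputable def fpmf (r : ℕ) (p : ℝ) (n : ℕ) : ℝ :=
  (∏ i ∈ Finset.Icc 1 (r - 1), ((n : ℝ) - (i : ℝ))) / (Nat.factorial (r - 1))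
    * p ^ r * (1 - p) ^ (n - r)

/-- Assumption 1: bounded variation on every compact subinterval of `(0,∞)`. -/
def Assumption1 (L : ℝ → ℝ) : Prop :=
  ∀ x₁ x₂ : ℝ, 0 < x₁ → x₁ < x₂ → BoundedVariationOn L (Set.Icc x₁ x₂)

/-- Assumption 2: finitely many discontinuities in every compact subinterval of `(0,∞)`. -/
def Assumption2 (L : ℝ → ℝ) : Prop :=
  ∀ x₁ x₂ : ℝ, 0 < x₁ → x₁ < x₂ →
    {x ∈ Set.Icc x₁ x₂ | ¬ ContinuousWithinAt L (Set.Ioi 0) x}.Finite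

/-- Assumption 3: `L(x) = O(x^K)` as `x → 0⁺` for some `K ∈ ℝ`, and
`L(x) = O(x^K')` as `x → ∞` for some `K' < r`. -/
def Assumption3 (r : ℕ) (L : ℝ → ℝ) : Prop :=
  (∃ K : ℝ, L =O[𝓝[>] (0 : ℝ)] fun x : ℝ => x ^ K) ∧
  (∃ K' : ℝ, K' < (r : ℝ) ∧ L =O[atTop] fun x : ℝ => x ^ K')

/-- Asymptotic risk `η̄(Ω) = ∫₀^∞ φ(ν) L(Ω/ν) dν`. -/
noncomputable def abar (r : ℕ) (L : ℝ → ℝ) (Ω : ℝ) : ℝ :=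
  ∫ ν in Set.Ioi (0 : ℝ), phi r ν * L (Ω / ν)

/-- Risk of the non-randomized estimator `p̂ = g(N)`:
`η(p) = Σ_{n=r}^∞ f(n) L(g(n)/p)`. -/
noncomputable def riskNR (r : ℕ) (L : ℝ → ℝ) (g : ℕ → ℝ) (p : ℝ) : ℝ :=
  ∑' n : ℕ, fpmf r p (n + r) * L (g (n + r) / p)

open Real

lemma one_le_rpow_add_rpow {x a b : ℝ} (hx : 0 < x) (ha : a ≤ 0) (hb : 0 ≤ b) :
    1 ≤ x ^ a + x ^ b := by
  rcases le_total x 1 with hx1 | hx1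
  · linarith [one_le_rpow_of_pos_of_le_one_of_nonpos hx hx1 ha, rpow_nonneg hx.le b]
  · linarith [one_le_rpow hx1 hb, rpow_nonneg hx.le a]

lemma exists_norm_le_mul_rpow_add_rpow {E : Type*} [NormedAddCommGroup E] {f : ℝ → E}
    {K K' : ℝ} (hbdd : ∀ x₁ x₂, 0 < x₁ → x₁ < x₂ → ∃ B, ∀ x ∈ Icc x₁ x₂, ‖f x‖ ≤ B)
    (h0 : f =O[𝓝[>] 0] fun x => x ^ K) (hinf : f =O[atTop] fun x => x ^ K') :
    ∃ C, 0 ≤ C ∧ ∀ x, 0 < x → ‖f x‖ ≤ C * (x ^ min K 0 + x ^ max K' 0) := by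
  obtain ⟨c₀, hc₀, hf₀⟩ := h0.exists_pos
  obtain ⟨δ, hδ, hnear⟩ := (nhdsGT_basis (0 : ℝ)).eventually_iff.1
    (hf₀.bound.and (Ioo_mem_nhdsGT one_pos))
  obtain ⟨c₁, hc₁, hf₁⟩ := hinf.exists_pos
  obtain ⟨M, hfar⟩ := eventually_atTop.1 (hf₁.bound.and (eventually_ge_atTop 1))
  obtain ⟨B, hB⟩ := hbdd δ (max M (δ + 1)) hδ (by linarith [le_max_right M (δ + 1)])
  set C := c₀ + c₁ + max B 0
  have hB0 := le_max_right B 0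
  refine ⟨C, by positivity, fun x hx => ?_⟩
  have hpow_a := rpow_nonneg hx.le (min K 0)
  have hpow_b := rpow_nonneg hx.le (max K' 0)
  rcases lt_or_ge x δ with hxδ | hxδ
  · obtain ⟨hfx, -, hx1⟩ := hnear ⟨hx, hxδ⟩
    rw [norm_of_nonneg (rpow_nonneg hx.le K)] at hfx
    calc ‖f x‖ ≤ c₀ * x ^ min K 0 :=
          hfx.trans <| mul_le_mul_of_nonneg_left
            (rpow_le_rpow_of_exponent_ge hx hx1.le (min_le_left K 0)) hc₀.le
      _ ≤ C * (x ^ min K 0 + x ^ max K' 0) := by gcongr <;> linarith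
  rcases le_or_gt x (max M (δ + 1)) with hxM | hxM
  · calc ‖f x‖ ≤ C * 1 := by linarith [hB x ⟨hxδ, hxM⟩, le_max_left B 0]
      _ ≤ C * (x ^ min K 0 + x ^ max K' 0) := by
          gcongr; exact one_le_rpow_add_rpow hx (min_le_right K 0) (le_max_right K' 0)
  · obtain ⟨hfx, hx1⟩ := hfar x (le_max_left M (δ + 1) |>.trans hxM.le)
    rw [norm_of_nonneg (rpow_nonneg hx.le K')] at hfx
    calc ‖f x‖ ≤ c₁ * x ^ max K' 0 :=
          hfx.trans <| mul_le_mul_of_nonneg_left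
            (rpow_le_rpow_of_exponent_le hx1 (le_max_left K' 0)) hc₁.le
      _ ≤ C * (x ^ min K 0 + x ^ max K' 0) := by gcongr <;> linarith

lemma Assumption1.exists_bound {L : ℝ → ℝ} (h1 : Assumption1 L) (x₁ x₂ : ℝ) (hx₁ : 0 < x₁)
    (hx₁₂ : x₁ < x₂) : ∃ B, ∀ x ∈ Icc x₁ x₂, ‖L x‖ ≤ B :=
  ⟨‖L x₁‖ + (eVariationOn L (Icc x₁ x₂)).toReal, fun x hx => by
    have := (h1 x₁ x₂ hx₁ hx₁₂).dist_le hx (left_mem_Icc.2 hx₁₂.le)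
    linarith [norm_sub_norm_le (L x) (L x₁), dist_eq_norm (L x) (L x₁)]⟩

lemma exists_le_mul_rpow_add_rpow {r : ℕ} (hr : 1 ≤ r) {L : ℝ → ℝ} (h1 : Assumption1 L)
    (h3 : Assumption3 r L) :
    ∃ C a b : ℝ, 0 ≤ C ∧ a ≤ 0 ∧ 0 ≤ b ∧ b < r ∧ ∀ x, 0 < x → L x ≤ C * (x ^ a + x ^ b) := by
  obtain ⟨⟨K, hK⟩, K', hK'r, hK'⟩ := h3
  obtain ⟨C, hC, hL⟩ := exists_norm_le_mul_rpow_add_rpow h1.exists_bound hK hK'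
  exact ⟨C, min K 0, max K' 0, hC, min_le_right K 0, le_max_right K' 0,
    max_lt hK'r (by exact_mod_cast hr), fun x hx => (le_abs_self _).trans (hL x hx)⟩

lemma rpow_add_rpow_le_of_mem_Icc {a b α β ν x : ℝ} (ha : a ≤ 0) (hb : 0 ≤ b) (hα : 0 < α)
    (hν : 0 < ν) (hx : x ∈ Icc (α / ν) (β / ν)) :
    x ^ a + x ^ b ≤ α ^ a * ν ^ (-a) + β ^ b * ν ^ (-b) := by
  have hx0 : 0 < x := (div_pos hα hν).trans_le hx.1
  have hβ : 0 ≤ β := ((div_pos_iff_of_pos_right hν).1 (hx0.trans_le hx.2)).le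
  gcongr
  · calc x ^ a ≤ (α / ν) ^ a := rpow_le_rpow_of_nonpos (div_pos hα hν) hx.1 ha
      _ = α ^ a * ν ^ (-a) := by rw [div_rpow hα.le hν.le, rpow_neg hν.le, div_eq_mul_inv]
  · calc x ^ b ≤ (β / ν) ^ b := rpow_le_rpow hx0.le hx.2 hb
      _ = β ^ b * ν ^ (-b) := by rw [div_rpow hβ hν.le, rpow_neg hν.le, div_eq_mul_inv]

lemma exists_pos_forall_mem_Icc_of_tendsto {u : ℕ → ℝ} {r : ℕ} {Ω : ℝ}
    (hu : ∀ n, r ≤ n → 0 < u n) (hΩ : 0 < Ω) (h : Tendsto u atTop (𝓝 Ω)) :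
    ∃ α β, 0 < α ∧ ∀ n, r ≤ n → u n ∈ Icc α β := by
  have hshift : Tendsto (fun k => u (k + r)) atTop (𝓝 Ω) := h.comp (tendsto_add_atTop_nat r)
  obtain ⟨β, hβ⟩ := hshift.bddAbove_range
  obtain ⟨B, hB⟩ := (hshift.inv₀ hΩ.ne').bddAbove_range
  have hB0 : 0 < B := (inv_pos.2 (hu (0 + r) (by simp))).trans_le (hB ⟨0, rfl⟩)
  refine ⟨B⁻¹, β, inv_pos.2 hB0, fun n hn => ?_⟩
  obtain ⟨k, rfl⟩ := Nat.exists_eq_add_of_le' hn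
  exact ⟨inv_le_of_inv_le₀ (hu _ hn) (hB ⟨k, rfl⟩), hβ ⟨k, rfl⟩⟩

lemma div_mem_Icc_of_mul_mem_Icc {α β p ν y : ℝ} {n : ℕ} (hn : 1 ≤ n) (hp : 0 < p)
    (hlow : p * n ≤ ν) (hup : ν < p * (n + 1)) (hα : 0 < α) (hy : n * y ∈ Icc α β) :
    y / p ∈ Icc (α / ν) (2 * β / ν) := by
  have hn' : (1 : ℝ) ≤ n := by exact_mod_cast hn
  have hpn : 0 < p * n := by positivity
  have hν : 0 < ν := hpn.trans_le hlow
  have hyp : y / p = n * y / (p * n) := by field_simp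
  rw [hyp]
  constructor
  · calc α / ν ≤ n * y / ν := by gcongr; exact hy.1
      _ ≤ n * y / (p * n) := div_le_div_of_nonneg_left (hα.le.trans hy.1) hpn hlow
  · have hny : 0 ≤ n * y := hα.le.trans hy.1
    rw [div_le_div_iff₀ hpn hν]
    calc n * y * ν ≤ n * y * (2 * (p * n)) := mul_le_mul_of_nonneg_left (by nlinarith) hny
      _ ≤ β * (2 * (p * n)) := by gcongr; exact hy.2
      _ = 2 * β * (p * n) := by ring

lemma mul_natFloor_div_le {p ν : ℝ} (hp : 0 < p) (hν : 0 ≤ ν) : p * ⌊ν / p⌋₊ ≤ ν := by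
  rw [mul_comm, ← le_div_iff₀ hp]
  exact Nat.floor_le (div_nonneg hν hp.le)

lemma lt_mul_natFloor_div_add_one {p : ℝ} (hp : 0 < p) (ν : ℝ) : ν < p * (⌊ν / p⌋₊ + 1) := by
  rw [mul_comm, ← div_lt_iff₀ hp]
  exact Nat.lt_floor_add_one _

lemma natFloor_div_eq_of_mem_Ico {p ν : ℝ} (hp : 0 < p) {n : ℕ}
    (hν : ν ∈ Ico (p * n) (p * (n + 1))) : ⌊ν / p⌋₊ = n := by
  have hn : (0 : ℝ) ≤ p * n := by positivity
  rw [Nat.floor_eq_iff (div_nonneg (hn.trans hν.1) hp.le), le_div_iff₀ hp, div_lt_iff₀ hp,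
    mul_comm _ p, mul_comm _ p]
  exact hν

lemma hasSum_integral_Ioi_comp_natFloor_div {E : Type*} [NormedAddCommGroup E] [NormedSpace ℝ E]
    [CompleteSpace E] {a : ℕ → E} {p : ℝ} (hp : 0 < p)
    (hint : IntegrableOn (fun ν => a ⌊ν / p⌋₊) (Ioi 0)) :
    HasSum (fun n => p • a n) (∫ ν in Ioi 0, a ⌊ν / p⌋₊) := by
  set s : ℕ → Set ℝ := fun n => Ico (p * n) (p * (n + 1))
  have hunion : ⋃ n, s n = Ici 0 := by
    ext ν
    simp only [mem_iUnion, mem_Ici]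
    refine ⟨fun ⟨n, hn⟩ => (by positivity : (0 : ℝ) ≤ p * n).trans hn.1, fun hν => ?_⟩
    exact ⟨⌊ν / p⌋₊, mul_natFloor_div_le hp hν, lt_mul_natFloor_div_add_one hp ν⟩
  have hdisj : Pairwise (Function.onFun Disjoint s) := fun m n hmn =>
    Set.disjoint_left.2 fun ν hm hn =>
      hmn ((natFloor_div_eq_of_mem_Ico hp hm).symm.trans (natFloor_div_eq_of_mem_Ico hp hn))
  have hpiece : ∀ n, ∫ ν in s n, a ⌊ν / p⌋₊ = p • a n := fun n => by
    rw [setIntegral_congr_fun measurableSet_Ico fun ν hν => by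
      rw [natFloor_div_eq_of_mem_Ico hp hν], setIntegral_const, measureReal_def, Real.volume_Ico,
      ENNReal.toReal_ofReal (by nlinarith)]
    ring_nf
  rw [← integral_Ici_eq_integral_Ioi, ← hunion]
  refine (hasSum_integral_iUnion (fun _ => measurableSet_Ico) hdisj ?_).congr_fun ?_
  · rwa [hunion, integrableOn_Ici_iff_integrableOn_Ioi]
  · exact fun n => (hpiece n).symm

lemma tendsto_mul_natFloor_div {ν : ℝ} (hν : 0 ≤ ν) :
    Tendsto (fun p => p * ⌊ν / p⌋₊) (𝓝[>] 0) (𝓝 ν) := by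
  have hlow : Tendsto (fun p : ℝ => ν - p) (𝓝[>] 0) (𝓝 ν) := by
    simpa using (tendsto_const_nhds.sub tendsto_id : Tendsto (fun p : ℝ => ν - p) (𝓝 0) _)
      |>.mono_left nhdsWithin_le_nhds
  refine tendsto_of_tendsto_of_tendsto_of_le_of_le' hlow tendsto_const_nhds ?_ ?_
  · filter_upwards [self_mem_nhdsWithin] with p hp
    linarith [lt_mul_natFloor_div_add_one hp ν]
  · filter_upwards [self_mem_nhdsWithin] with p hp
    exact mul_natFloor_div_le hp hν

lemma tendsto_natFloor_div_atTop {ν : ℝ} (hν : 0 < ν) :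
    Tendsto (fun p => ⌊ν / p⌋₊) (𝓝[>] 0) atTop :=
  tendsto_nat_floor_atTop.comp <| (tendsto_inv_nhdsGT_zero.const_mul_atTop hν).congr
    fun p => (div_eq_mul_inv ν p).symm

lemma tendsto_log_one_sub_div : Tendsto (fun p => log (1 - p) / p) (𝓝[>] 0) (𝓝 (-1)) := by
  have hderiv : HasDerivAt (fun x => log (1 - x)) (-1) 0 := by
    simpa using ((hasDerivAt_id (0 : ℝ)).const_sub 1).log (by norm_num)
  simpa [div_eq_inv_mul] using hderiv.tendsto_slope_zero_right

lemma tendsto_one_sub_pow_of_tendsto_mul {m : ℝ → ℕ} {c : ℝ}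
    (h : Tendsto (fun p => p * m p) (𝓝[>] 0) (𝓝 c)) :
    Tendsto (fun p => (1 - p) ^ m p) (𝓝[>] 0) (𝓝 (exp (-c))) := by
  -- `(1 - p) ^ m = exp (p m · (log (1 - p) / p))`
  have hlim := (continuous_exp.tendsto _).comp (h.mul tendsto_log_one_sub_div)
  rw [mul_neg_one] at hlim
  refine hlim.congr' ?_
  filter_upwards [self_mem_nhdsWithin, Ioo_mem_nhdsGT one_pos] with p hp hp1
  rw [Function.comp_apply, mul_comm p, mul_assoc, mul_div_cancel₀ _ (ne_of_gt hp), exp_nat_mul,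
    exp_log (sub_pos.2 hp1.2)]

lemma fpmf_nonneg {r n : ℕ} {p : ℝ} (hp0 : 0 ≤ p) (hp1 : p ≤ 1) (hn : r ≤ n) :
    0 ≤ fpmf r p n := by
  have hprod : 0 ≤ ∏ i ∈ Finset.Icc 1 (r - 1), ((n : ℝ) - i) :=
    Finset.prod_nonneg fun i hi => sub_nonneg.2 <| by
      exact_mod_cast (Finset.mem_Icc.1 hi).2.trans ((Nat.sub_le r 1).trans hn)
  unfold fpmf
  have := sub_nonneg.2 hp1
  positivity

lemma fpmf_div_eq {r n : ℕ} (hr : 1 ≤ r) {p : ℝ} (hp : p ≠ 0) :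
    fpmf r p n / p =
      (∏ i ∈ Finset.Icc 1 (r - 1), (p * n - p * i)) / (r - 1).factorial * (1 - p) ^ (n - r) := by
  have hprod : ∏ i ∈ Finset.Icc 1 (r - 1), (p * n - p * i)
      = p ^ (r - 1) * ∏ i ∈ Finset.Icc 1 (r - 1), ((n : ℝ) - i) := by
    simp_rw [← mul_sub, Finset.prod_mul_distrib, Finset.prod_const, Nat.card_Icc,
      Nat.add_sub_cancel]
  have hpow : p ^ r = p ^ (r - 1) * p := by rw [← pow_succ, Nat.sub_add_cancel hr]
  rw [hprod, fpmf, hpow]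
  field_simp

lemma fpmf_div_le {r n : ℕ} (hr : 1 ≤ r) {p ν : ℝ} (hp : 0 < p) (hp1 : p < 1) (hn : r ≤ n)
    (hlow : p * n ≤ ν) (hup : ν ≤ p * (n + 1)) :
    fpmf r p n / p ≤ exp (r + 1) * phi r ν := by
  have hprod : ∏ i ∈ Finset.Icc 1 (r - 1), (p * n - p * i) ≤ ν ^ (r - 1) := by
    calc ∏ i ∈ Finset.Icc 1 (r - 1), (p * n - p * i)
        ≤ ∏ _i ∈ Finset.Icc 1 (r - 1), ν := by
          refine Finset.prod_le_prod (fun i hi => ?_) (fun i _ => ?_)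
          · have : (i : ℝ) ≤ n := by
              exact_mod_cast (Finset.mem_Icc.1 hi).2.trans ((Nat.sub_le r 1).trans hn)
            nlinarith
          · have : (0 : ℝ) ≤ i := i.cast_nonneg
            nlinarith
      _ = ν ^ (r - 1) := by simp
  have hgeom : (1 - p) ^ (n - r) ≤ exp (r + 1) * exp (-ν) := by
    have hexp : -(p * (n - r : ℕ)) ≤ r + 1 + -ν := by
      have : (r : ℝ) ≤ n := by exact_mod_cast hn
      rw [Nat.cast_sub hn]
      nlinarith
    calc (1 - p) ^ (n - r) ≤ exp (-p) ^ (n - r) :=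
          pow_le_pow_left₀ (by linarith) (one_sub_le_exp_neg p) _
      _ = exp (-(p * (n - r : ℕ))) := by rw [← exp_nat_mul]; ring_nf
      _ ≤ exp (r + 1) * exp (-ν) := by rw [← exp_add]; exact exp_le_exp.2 hexp
  rw [fpmf_div_eq hr hp.ne', phi]
  calc (∏ i ∈ Finset.Icc 1 (r - 1), (p * n - p * i)) / (r - 1).factorial * (1 - p) ^ (n - r)
      ≤ ν ^ (r - 1) / (r - 1).factorial * (exp (r + 1) * exp (-ν)) := by
        have hν : 0 ≤ ν := (by positivity : (0 : ℝ) ≤ p * n).trans hlow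
        gcongr
      _ = exp (r + 1) * (ν ^ (r - 1) * exp (-ν) / (r - 1).factorial) := by ring

lemma tendsto_fpmf_natFloor_div {r : ℕ} (hr : 1 ≤ r) {ν : ℝ} (hν : 0 < ν) :
    Tendsto (fun p => fpmf r p ⌊ν / p⌋₊ / p) (𝓝[>] 0) (𝓝 (phi r ν)) := by
  have hfloor := tendsto_mul_natFloor_div hν.le
  have hlin : ∀ c : ℝ, Tendsto (fun p : ℝ => p * c) (𝓝[>] 0) (𝓝 0) := fun c => by
    simpa using (tendsto_id.mul_const c : Tendsto (fun p : ℝ => p * c) (𝓝 0) _)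
      |>.mono_left nhdsWithin_le_nhds
  have hge : ∀ᶠ p in 𝓝[>] 0, r ≤ ⌊ν / p⌋₊ := (tendsto_natFloor_div_atTop hν).eventually_ge_atTop r
  have hprod : Tendsto (fun p => ∏ i ∈ Finset.Icc 1 (r - 1), (p * ⌊ν / p⌋₊ - p * i))
      (𝓝[>] 0) (𝓝 (ν ^ (r - 1))) := by
    simpa using tendsto_finsetProd (Finset.Icc 1 (r - 1)) fun i _ => hfloor.sub (hlin i)
  have hgeom : Tendsto (fun p => (1 - p) ^ (⌊ν / p⌋₊ - r)) (𝓝[>] 0) (𝓝 (exp (-ν))) := by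
    refine tendsto_one_sub_pow_of_tendsto_mul <| (sub_zero ν ▸ hfloor.sub (hlin r)).congr' ?_
    filter_upwards [hge] with p hp
    rw [Nat.cast_sub hp, mul_sub]
  have hlimit := (hprod.div_const ((r - 1).factorial : ℝ)).mul hgeom
  rw [show ν ^ (r - 1) / (r - 1).factorial * exp (-ν) = phi r ν by rw [phi]; ring] at hlimit
  refine hlimit.congr' ?_
  filter_upwards [self_mem_nhdsWithin] with p hp
  exact (fpmf_div_eq hr (ne_of_gt hp)).symm

lemma integrableOn_phi_mul_rpow {r : ℕ} (hr : 1 ≤ r) {s : ℝ} (hs : -s < r) :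
    IntegrableOn (fun ν => phi r ν * ν ^ s) (Ioi 0) := by
  have hgamma : IntegrableOn
      (fun ν => ((r - 1).factorial : ℝ)⁻¹ * (exp (-ν) * ν ^ ((r : ℝ) + s - 1))) (Ioi 0) :=
    (GammaIntegral_convergent (by linarith)).const_mul _
  refine hgamma.congr_fun (fun ν (hν : 0 < ν) => ?_) measurableSet_Ioi
  have hpow : ν ^ ((r : ℝ) + s - 1) = ν ^ (r - 1) * ν ^ s := by
    rw [← rpow_natCast, ← rpow_add hν, Nat.cast_sub hr, Nat.cast_one, add_sub_right_comm]
  simp only [phi, hpow]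
  ring

lemma Assumption2.countable_not_continuousAt {L : ℝ → ℝ} (h2 : Assumption2 L) :
    {x | 0 < x ∧ ¬ ContinuousAt L x}.Countable := by
  refine (countable_iUnion fun k : ℕ =>
    (h2 ((k : ℝ) + 2)⁻¹ (k + 2) (by positivity) ?_).countable).mono fun x ⟨hx, hdisc⟩ => ?_
  · have : (1 : ℝ) < k + 2 := by linarith [k.cast_nonneg (α := ℝ)]
    exact (inv_lt_one_of_one_lt₀ this).trans this
  · have hk := Nat.le_ceil (x + x⁻¹)
    have hxinv := inv_pos.2 hx
    refine mem_iUnion.2 ⟨⌈x + x⁻¹⌉₊, ⟨⟨inv_le_of_inv_le₀ hx (by linarith), by linarith⟩,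
      fun h => hdisc (h.continuousAt (Ioi_mem_nhds hx))⟩⟩

lemma Assumption2.ae_continuousAt_div {L : ℝ → ℝ} (h2 : Assumption2 L) {Ω : ℝ} (hΩ : 0 < Ω) :
    ∀ᵐ ν, 0 < ν → ContinuousAt L (Ω / ν) := by
  have hinj : Function.Injective fun ν : ℝ => Ω / ν :=
    Function.Involutive.injective fun ν => div_div_cancel₀ hΩ.ne'
  filter_upwards [(h2.countable_not_continuousAt.preimage hinj).ae_notMem volume] with ν hν hν0
  by_contra hdisc
  exact hν ⟨div_pos hΩ hν0, hdisc⟩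

noncomputable def riskTerm (r : ℕ) (L : ℝ → ℝ) (g : ℕ → ℝ) (p : ℝ) (n : ℕ) : ℝ :=
  if r ≤ n then fpmf r p n * L (g n / p) else 0

/-- `η(p) = ∫₀^∞ riskDensity r L g p ν dν`: on `[p n, p (n + 1))` the density is
`f(n) L(g(n)/p) / p`. -/
noncomputable def riskDensity (r : ℕ) (L : ℝ → ℝ) (g : ℕ → ℝ) (p ν : ℝ) : ℝ :=
  riskTerm r L g p ⌊ν / p⌋₊ / p

section riskDensity

variable {r : ℕ} {L : ℝ → ℝ} {g : ℕ → ℝ}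

lemma riskTerm_of_lt {p : ℝ} {n : ℕ} (hn : n < r) : riskTerm r L g p n = 0 :=
  if_neg hn.not_ge

lemma riskTerm_add (p : ℝ) (n : ℕ) :
    riskTerm r L g p (n + r) = fpmf r p (n + r) * L (g (n + r) / p) :=
  if_pos (Nat.le_add_left r n)

lemma measurable_riskDensity (p : ℝ) : Measurable (riskDensity r L g p) :=
  (measurable_from_nat (f := fun n => riskTerm r L g p n / p)).comp
    (Nat.measurable_floor.comp (measurable_id.div_const p))

lemma riskDensity_nonneg (hL0 : ∀ x, 0 ≤ L x) {p : ℝ} (hp : 0 < p) (hp1 : p ≤ 1) (ν : ℝ) :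
    0 ≤ riskDensity r L g p ν := by
  unfold riskDensity riskTerm
  split_ifs with hn
  · exact div_nonneg (mul_nonneg (fpmf_nonneg hp.le hp1 hn) (hL0 _)) hp.le
  · simp

lemma hasSum_of_integrableOn_riskDensity {p : ℝ} (hp : 0 < p)
    (hint : IntegrableOn (riskDensity r L g p) (Ioi 0)) :
    HasSum (fun n => fpmf r p (n + r) * L (g (n + r) / p))
      (∫ ν in Ioi 0, riskDensity r L g p ν) := by
  have h := hasSum_integral_Ioi_comp_natFloor_div (a := fun n => riskTerm r L g p n / p) hp hint
  simp only [smul_eq_mul, mul_div_cancel₀ _ hp.ne'] at h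
  rw [← hasSum_nat_add_iff' r, Finset.sum_eq_zero fun i hi =>
    riskTerm_of_lt (Finset.mem_range.1 hi), sub_zero] at h
  simp only [riskTerm_add] at h
  exact h

lemma riskDensity_le (hr : 1 ≤ r) (hL0 : ∀ x, 0 ≤ L x) {C a b α β : ℝ} (hC : 0 ≤ C)
    (ha : a ≤ 0) (hb : 0 ≤ b) (hL : ∀ x, 0 < x → L x ≤ C * (x ^ a + x ^ b)) (hα : 0 < α)
    (hg : ∀ n, r ≤ n → n * g n ∈ Icc α β) {p ν : ℝ} (hp : 0 < p) (hp1 : p < 1) (hν : 0 < ν) :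
    riskDensity r L g p ν
      ≤ exp (r + 1) * C * (α ^ a * (phi r ν * ν ^ (-a)) + (2 * β) ^ b * (phi r ν * ν ^ (-b))) := by
  have hβ : 0 < β := hα.trans_le ((hg r le_rfl).1.trans (hg r le_rfl).2)
  have hphi : 0 ≤ phi r ν := by unfold phi; positivity
  unfold riskDensity riskTerm
  split_ifs with hn
  · set n := ⌊ν / p⌋₊
    have hlow := mul_natFloor_div_le hp hν.le
    have hup := lt_mul_natFloor_div_add_one hp ν
    have hx := div_mem_Icc_of_mul_mem_Icc (hr.trans hn) hp hlow hup hα (hg n hn)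
    calc fpmf r p n * L (g n / p) / p = fpmf r p n / p * L (g n / p) := by ring
      _ ≤ exp (r + 1) * phi r ν * (C * (α ^ a * ν ^ (-a) + (2 * β) ^ b * ν ^ (-b))) := by
          refine mul_le_mul (fpmf_div_le hr hp hp1 hn hlow hup.le) ?_ (hL0 _) (by positivity)
          exact (hL _ ((div_pos hα hν).trans_le hx.1)).trans
            (mul_le_mul_of_nonneg_left (rpow_add_rpow_le_of_mem_Icc ha hb hα hν hx) hC)
      _ = _ := by ring
  · simp only [zero_div]
    positivity

lemma tendsto_riskDensity (hr : 1 ≤ r) {Ω : ℝ}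
    (hlim : Tendsto (fun n : ℕ => (n : ℝ) * g n) atTop (𝓝 Ω)) {ν : ℝ} (hν : 0 < ν)
    (hcont : ContinuousAt L (Ω / ν)) :
    Tendsto (fun p => riskDensity r L g p ν) (𝓝[>] 0) (𝓝 (phi r ν * L (Ω / ν))) := by
  have hn := tendsto_natFloor_div_atTop hν
  have hratio : Tendsto (fun p => g ⌊ν / p⌋₊ / p) (𝓝[>] 0) (𝓝 (Ω / ν)) := by
    refine ((hlim.comp hn).div (tendsto_mul_natFloor_div hν.le) hν.ne').congr' ?_
    filter_upwards [self_mem_nhdsWithin, hn.eventually_ge_atTop 1] with p hp h1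
    have : (⌊ν / p⌋₊ : ℝ) ≠ 0 := by positivity
    simp only [Pi.div_apply, Function.comp_apply]
    field_simp
  refine ((tendsto_fpmf_natFloor_div hr hν).mul (hcont.tendsto.comp hratio)).congr' ?_
  filter_upwards [hn.eventually_ge_atTop r] with p hp
  simp only [riskDensity, riskTerm, if_pos hp, Function.comp_apply]
  ring

end riskDensity

lemma exists_integrableOn_riskDensity_le {r : ℕ} (hr : 1 ≤ r) {L : ℝ → ℝ} (hL0 : ∀ x, 0 ≤ L x)
    (h1 : Assumption1 L) (h3 : Assumption3 r L) {g : ℕ → ℝ} (hg : ∀ n, r ≤ n → 0 < g n) {Ω : ℝ}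
    (hΩ : 0 < Ω) (hlim : Tendsto (fun n : ℕ => (n : ℝ) * g n) atTop (𝓝 Ω)) :
    ∃ G : ℝ → ℝ, IntegrableOn G (Ioi 0) ∧
      ∀ p ∈ Ioo (0 : ℝ) 1, ∀ ν ∈ Ioi (0 : ℝ), riskDensity r L g p ν ≤ G ν := by
  obtain ⟨C, a, b, hC, ha, hb, hbr, hL⟩ := exists_le_mul_rpow_add_rpow hr h1 h3
  obtain ⟨α, β, hα, hg'⟩ := exists_pos_forall_mem_Icc_of_tendsto
    (fun n hn => mul_pos (by exact_mod_cast hr.trans hn) (hg n hn)) hΩ hlim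
  refine ⟨_, (((integrableOn_phi_mul_rpow hr (s := -a) (by linarith)).const_mul _).add
    ((integrableOn_phi_mul_rpow hr (s := -b) (by linarith)).const_mul _)).const_mul _,
    fun p hp ν hν => riskDensity_le hr hL0 hC ha hb hL hα hg' hp.1 hp.2 hν⟩

/-- Theorem 1: for a non-randomized estimator `g` with
`lim_{n→∞} n g(n) = Ω` finite and nonzero, the risk converges as `p → 0⁺` to the
asymptotic risk `η̄(Ω)`. -/
theorem stmt0 (r : ℕ) (hr : 1 ≤ r) (L : ℝ → ℝ) (hL0 : ∀ x : ℝ, 0 ≤ L x)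
    (h1 : Assumption1 L) (h2 : Assumption2 L) (h3 : Assumption3 r L)
    (g : ℕ → ℝ) (hg : ∀ n : ℕ, r ≤ n → 0 < g n)
    (Ω : ℝ) (hΩ : 0 < Ω)
    (hlim : Tendsto (fun n : ℕ => (n : ℝ) * g n) atTop (𝓝 Ω)) :
    (∀ p ∈ Set.Ioo (0 : ℝ) 1,
        Summable (fun n : ℕ => fpmf r p (n + r) * L (g (n + r) / p))) ∧
    Tendsto (fun p : ℝ => riskNR r L g p) (𝓝[>] (0 : ℝ)) (𝓝 (abar r L Ω)) := by
  obtain ⟨G, hGint, hG⟩ := exists_integrableOn_riskDensity_le hr hL0 h1 h3 hg hΩ hlim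
  have hdom : ∀ p ∈ Ioo (0 : ℝ) 1,
      ∀ᵐ ν ∂volume.restrict (Ioi 0), ‖riskDensity r L g p ν‖ ≤ G ν :=
    fun p hp => (ae_restrict_iff' measurableSet_Ioi).2 <| ae_of_all _ fun ν hν => by
      rw [Real.norm_of_nonneg (riskDensity_nonneg hL0 hp.1 hp.2.le ν)]
      exact hG p hp ν hν
  have hsum : ∀ p ∈ Ioo (0 : ℝ) 1, HasSum (fun n => fpmf r p (n + r) * L (g (n + r) / p))
      (∫ ν in Ioi 0, riskDensity r L g p ν) := fun p hp =>
    hasSum_of_integrableOn_riskDensity hp.1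
      (hGint.mono' (measurable_riskDensity p).aestronglyMeasurable (hdom p hp))
  refine ⟨fun p hp => (hsum p hp).summable, ?_⟩
  have hIoo : Ioo (0 : ℝ) 1 ∈ 𝓝[>] 0 := Ioo_mem_nhdsGT one_pos
  refine (tendsto_integral_filter_of_dominated_convergence G
    (.of_forall fun p => (measurable_riskDensity p).aestronglyMeasurable)
    (eventually_of_mem hIoo hdom) hGint ?_).congr' ?_
  · filter_upwards [ae_restrict_mem measurableSet_Ioi,
      ae_restrict_of_ae (h2.ae_continuousAt_div hΩ)] with ν hν hcont
    exact tendsto_riskDensity hr hlim hν (hcont hν)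
  · filter_upwards [hIoo] with p hp
    exact (hsum p hp).tsum_eq.symm
end

section
/- Let r ∈ ℕ, r ≥ 1, and let L be a loss function satisfying Assumptions 1, 2' and 3. Then the asymptotic risk η̄(Ω) = ∫₀^∞ ψ(x,Ω) L(x) dx is a continuously differentiable (C¹) function of Ω on (0,∞), with dη̄/dΩ = ∫₀^∞ (∂ψ(x,Ω)/∂Ω) L(x) dx. Moreover, denoting by η̄|_r the asymptotic risk corresponding to parameter r, the derivative satisfies dη̄|_r/dΩ = r (η̄|_r(Ω) − η̄|_{r+1}(Ω)) / Ω. -/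
open MeasureTheory Filter Set Topology Asymptotics
open scoped ENNReal NNReal BigOperators

/-- `ψ(x,Ω) = Ω^r e^(-Ω/x) / (x^(r+1) (r-1)!)`. -/
noncomputable def psi (r : ℕ) (x Ω : ℝ) : ℝ :=
  Ω ^ r * Real.exp (-Ω / x) / (x ^ (r + 1) * (Nat.factorial (r - 1)))

/-- Assumption 2': finitely many discontinuities in `(0,∞)`. -/
def Assumption2' (L : ℝ → ℝ) : Prop :=
  {x ∈ Set.Ioi (0 : ℝ) | ¬ ContinuousWithinAt L (Set.Ioi 0) x}.Finite

/-- Asymptotic risk, expressed as `η̄(Ω) = ∫₀^∞ ψ(x,Ω) L(x) dx`. -/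
noncomputable def abarPsi (r : ℕ) (L : ℝ → ℝ) (Ω : ℝ) : ℝ :=
  ∫ x in Set.Ioi (0 : ℝ), psi r x Ω * L x

/-!
Since `ψ(x,Ω) = Ω^r/(r-1)! · e^{-Ω/x} x^{-(r+1)}`, the risk is `η̄_r(Ω) = Ω^r/(r-1)! · I_{r+1}(Ω)`
with `I_n(a) = ∫₀^∞ e^{-a/x} x^{-n} L(x) dx`. Bounded variation makes `L` locally integrable,
and for `a > 0`, `n > K' + 1` the integrand of `I_n` is integrable at both ends: near `0` the
factor `e^{-a/x}` beats the power `x^{K-n}`, near `∞` the integrand is `O(x^{K'-n})`.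
On `|w - a| < a/2` the `w`-derivative of the integrand of `I_n(w)` is dominated by the integrand
of `I_{n+1}(a/2)`, so `I_n' = -I_{n+1}`. The product rule and `r/r! = 1/(r-1)!` then give
`η̄_r' = r (η̄_r - η̄_{r+1}) / Ω`, which is continuous since `η̄_r` and `η̄_{r+1}` are
differentiable.
-/

theorem BoundedVariationOn.integrableOn_of_isCompact {f : ℝ → ℝ} {s : Set ℝ} {μ : Measure ℝ}
    [IsFiniteMeasureOnCompacts μ] (hf : BoundedVariationOn f s) (hs : IsCompact s) :
    IntegrableOn f s μ := by
  obtain ⟨p, q, hp, hq, rfl⟩ := hf.locallyBoundedVariationOn.exists_monotoneOn_sub_monotoneOn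
  exact (hp.integrableOn_isCompact hs).sub (hq.integrableOn_isCompact hs)

theorem Assumption1.locallyIntegrableOn {L : ℝ → ℝ} (h1 : Assumption1 L) :
    LocallyIntegrableOn L (Ioi 0) := fun x (hx : 0 < x) =>
  ⟨Icc (x / 2) (2 * x), nhdsWithin_le_nhds (Icc_mem_nhds (by linarith) (by linarith)),
    (h1 _ _ (half_pos hx) (by linarith)).integrableOn_of_isCompact isCompact_Icc⟩

theorem continuousOn_exp_neg_div_div_pow (a : ℝ) (n : ℕ) :
    ContinuousOn (fun x : ℝ => Real.exp (-a / x) / x ^ n) (Ioi 0) :=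
  (Real.continuous_exp.comp_continuousOn
    (continuousOn_const.div continuousOn_id fun _ hx => ne_of_gt hx)).div
    (continuousOn_pow n) fun _ hx => pow_ne_zero _ (ne_of_gt hx)

theorem isBigO_exp_neg_div_div_pow_nhdsGT {L : ℝ → ℝ} {K : ℝ}
    (hK : L =O[𝓝[>] (0 : ℝ)] fun x : ℝ => x ^ K) (n : ℕ) {a : ℝ} (ha : 0 < a) :
    (fun x => Real.exp (-a / x) / x ^ n * L x) =O[𝓝[>] (0 : ℝ)] fun _ => (1 : ℝ) := by
  have hlim : Tendsto (fun x : ℝ => Real.exp (-a / x) / x ^ n * x ^ K) (𝓝[>] 0) (𝓝 0) := by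
    -- in the variable `t = x⁻¹ → ∞` this is `t ^ (n - K) * e^{-a t} → 0`
    refine ((tendsto_rpow_mul_exp_neg_mul_atTop_nhds_zero (n - K) a ha).comp
      tendsto_inv_nhdsGT_zero).congr' ?_
    filter_upwards [self_mem_nhdsWithin] with x (hx : 0 < x)
    simp only [Function.comp_apply]
    rw [Real.inv_rpow hx.le, ← Real.rpow_neg hx.le, neg_sub, Real.rpow_sub hx,
      Real.rpow_natCast]
    field_simp
  exact ((isBigO_refl _ _).mul hK).trans (hlim.isBigO_one ℝ)

theorem isBigO_exp_neg_div_div_pow_atTop {L : ℝ → ℝ} {K' : ℝ}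
    (hK' : L =O[atTop] fun x : ℝ => x ^ K') (n : ℕ) {a : ℝ} (ha : 0 ≤ a) :
    (fun x => Real.exp (-a / x) / x ^ n * L x) =O[atTop] fun x => x ^ (K' - n) := by
  have hkernel : (fun x : ℝ => Real.exp (-a / x) / x ^ n) =O[atTop] fun x => x ^ (-(n : ℝ)) := by
    refine IsBigO.of_bound 1 ?_
    filter_upwards [eventually_gt_atTop 0] with x hx
    rw [Real.norm_of_nonneg (by positivity), Real.norm_of_nonneg (by positivity),
      Real.rpow_neg hx.le, Real.rpow_natCast, one_mul, ← one_div]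
    gcongr
    exact Real.exp_le_one_iff.2 (div_nonpos_of_nonpos_of_nonneg (by linarith) hx.le)
  refine (hkernel.mul hK').congr' EventuallyEq.rfl ?_
  filter_upwards [eventually_gt_atTop 0] with x hx
  rw [← Real.rpow_add hx]; ring_nf

theorem integrableOn_exp_neg_div_div_pow_mul {L : ℝ → ℝ} (h1 : Assumption1 L) {K K' : ℝ}
    (hK : L =O[𝓝[>] (0 : ℝ)] fun x : ℝ => x ^ K) (hK' : L =O[atTop] fun x : ℝ => x ^ K')
    {n : ℕ} (hn : K' + 1 < n) {a : ℝ} (ha : 0 < a) :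
    IntegrableOn (fun x => Real.exp (-a / x) / x ^ n * L x) (Ioi 0) := by
  have hloc : LocallyIntegrableOn (fun x => Real.exp (-a / x) / x ^ n * L x) (Ioi 0) :=
    h1.locallyIntegrableOn.continuousOn_mul (continuousOn_exp_neg_div_div_pow a n)
      isOpen_Ioi.isLocallyClosed
  have hmeas : ∀ l : Filter ℝ, Ioi 0 ∈ l →
      StronglyMeasurableAtFilter (fun x => Real.exp (-a / x) / x ^ n * L x) l :=
    fun _ hl => ⟨_, hl, hloc.aestronglyMeasurable⟩
  refine integrableOn_Ioi_iff_integrableAtFilter_atTop_nhdsWithin.2 ⟨?_, ?_, hloc⟩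
  · exact (isBigO_exp_neg_div_div_pow_atTop hK' n ha.le).integrableAtFilter
      (hmeas _ (Ioi_mem_atTop 0))
      ⟨Ioi 1, Ioi_mem_atTop 1, integrableOn_Ioi_rpow_of_lt (by linarith) one_pos⟩
  · exact (isBigO_exp_neg_div_div_pow_nhdsGT hK n ha).integrableAtFilter
      (hmeas _ self_mem_nhdsWithin)
      ⟨Ioo 0 1, Ioo_mem_nhdsGT one_pos, integrableOn_const measure_Ioo_lt_top.ne⟩

noncomputable def expNegDivIntegral (L : ℝ → ℝ) (n : ℕ) (a : ℝ) : ℝ :=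
  ∫ x in Ioi 0, Real.exp (-a / x) / x ^ n * L x

theorem hasDerivAt_exp_neg_div_div_pow (n : ℕ) {x : ℝ} (hx : x ≠ 0) (a : ℝ) :
    HasDerivAt (fun w => Real.exp (-w / x) / x ^ n) (-(Real.exp (-a / x) / x ^ (n + 1))) a := by
  refine (((hasDerivAt_neg a).div_const x).exp.div_const (x ^ n)).congr_deriv ?_
  field_simp
  ring

theorem hasDerivAt_expNegDivIntegral {L : ℝ → ℝ} (h1 : Assumption1 L) {K K' : ℝ}
    (hK : L =O[𝓝[>] (0 : ℝ)] fun x : ℝ => x ^ K) (hK' : L =O[atTop] fun x : ℝ => x ^ K')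
    {n : ℕ} (hn : K' + 1 < n) {a : ℝ} (ha : 0 < a) :
    HasDerivAt (expNegDivIntegral L n) (-expNegDivIntegral L (n + 1) a) a := by
  have hint : ∀ m : ℕ, K' + 1 < m → ∀ b : ℝ, 0 < b →
      IntegrableOn (fun x => Real.exp (-b / x) / x ^ m * L x) (Ioi 0) :=
    fun _ hm _ hb => integrableOn_exp_neg_div_div_pow_mul h1 hK hK' hm hb
  have hn' : K' + 1 < (n + 1 : ℕ) := by push_cast; linarith
  have hball : ∀ w ∈ Metric.ball a (a / 2), a / 2 < w := fun w hw => by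
    rw [Metric.mem_ball, Real.dist_eq, abs_lt] at hw; linarith
  have hbound : ∀ᵐ x ∂volume.restrict (Ioi 0), ∀ w ∈ Metric.ball a (a / 2),
      ‖-(Real.exp (-w / x) / x ^ (n + 1) * L x)‖ ≤
        ‖Real.exp (-(a / 2) / x) / x ^ (n + 1) * L x‖ := by
    refine ae_restrict_of_forall_mem measurableSet_Ioi fun x (hx : 0 < x) w hw => ?_
    rw [norm_neg, norm_mul, norm_mul,
      Real.norm_of_nonneg (by positivity : 0 ≤ Real.exp (-w / x) / x ^ (n + 1)),
      Real.norm_of_nonneg (by positivity : 0 ≤ Real.exp (-(a / 2) / x) / x ^ (n + 1))]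
    gcongr
    linarith [hball w hw]
  have hdiff : ∀ᵐ x ∂volume.restrict (Ioi 0), ∀ w ∈ Metric.ball a (a / 2),
      HasDerivAt (fun w => Real.exp (-w / x) / x ^ n * L x)
        (-(Real.exp (-w / x) / x ^ (n + 1) * L x)) w :=
    ae_restrict_of_forall_mem measurableSet_Ioi fun x (hx : 0 < x) w _ => by
      simpa only [neg_mul] using (hasDerivAt_exp_neg_div_div_pow n hx.ne' w).mul_const (L x)
  have key := hasDerivAt_integral_of_dominated_loc_of_deriv_le
    (Metric.ball_mem_nhds a (half_pos ha))
    ((eventually_gt_nhds ha).mono fun w hw => (hint n hn w hw).aestronglyMeasurable)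
    (hint n hn a ha) (hint (n + 1) hn' a ha).neg.aestronglyMeasurable hbound
    (hint (n + 1) hn' (a / 2) (half_pos ha)).norm hdiff
  have h := key.2
  rwa [integral_neg] at h

theorem psi_eq_mul (r : ℕ) (x Ω : ℝ) :
    psi r x Ω = Ω ^ r / (r - 1).factorial * (Real.exp (-Ω / x) / x ^ (r + 1)) := by
  rw [psi]; ring

theorem abarPsi_eq_mul_expNegDivIntegral (r : ℕ) (L : ℝ → ℝ) :
    abarPsi r L = fun Ω => Ω ^ r / (r - 1).factorial * expNegDivIntegral L (r + 1) Ω := by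
  funext Ω
  simp only [abarPsi, expNegDivIntegral, psi_eq_mul, mul_assoc, integral_const_mul]

theorem integrableOn_psi_mul {L : ℝ → ℝ} (h1 : Assumption1 L) {K K' : ℝ}
    (hK : L =O[𝓝[>] (0 : ℝ)] fun x : ℝ => x ^ K) (hK' : L =O[atTop] fun x : ℝ => x ^ K')
    {r : ℕ} (hr : K' < r) {Ω : ℝ} (hΩ : 0 < Ω) :
    IntegrableOn (fun x => psi r x Ω * L x) (Ioi 0) := by
  refine IntegrableOn.congr_fun ((integrableOn_exp_neg_div_div_pow_mul h1 hK hK' (n := r + 1)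
    (by push_cast; linarith) hΩ).const_mul (Ω ^ r / (r - 1).factorial))
    (fun x _ => by rw [psi_eq_mul, mul_assoc]) measurableSet_Ioi

theorem hasDerivAt_psi {r : ℕ} (hr : 1 ≤ r) {x : ℝ} (hx : x ≠ 0) {Ω : ℝ} (hΩ : Ω ≠ 0) :
    HasDerivAt (psi r x) (r * (psi r x Ω - psi (r + 1) x Ω) / Ω) Ω := by
  rw [show psi r x = _ from funext (psi_eq_mul r x)]
  refine (((hasDerivAt_pow r Ω).div_const ((r - 1).factorial : ℝ)).mul
    (hasDerivAt_exp_neg_div_div_pow (r + 1) hx Ω)).congr_deriv ?_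
  obtain ⟨m, rfl⟩ := Nat.exists_eq_add_of_le' hr
  simp only [psi_eq_mul, Nat.add_sub_cancel, Nat.factorial_succ]
  push_cast
  field_simp
  ring

theorem hasDerivAt_abarPsi {r : ℕ} (hr : 1 ≤ r) {L : ℝ → ℝ} (h1 : Assumption1 L) {K K' : ℝ}
    (hK : L =O[𝓝[>] (0 : ℝ)] fun x : ℝ => x ^ K) (hK' : L =O[atTop] fun x : ℝ => x ^ K')
    (hr' : K' < r) {Ω : ℝ} (hΩ : 0 < Ω) :
    HasDerivAt (abarPsi r L) (r * (abarPsi r L Ω - abarPsi (r + 1) L Ω) / Ω) Ω := by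
  rw [abarPsi_eq_mul_expNegDivIntegral r L]
  refine (((hasDerivAt_pow r Ω).div_const ((r - 1).factorial : ℝ)).mul
    (hasDerivAt_expNegDivIntegral h1 hK hK' (n := r + 1) (by push_cast; linarith)
      hΩ)).congr_deriv ?_
  obtain ⟨m, rfl⟩ := Nat.exists_eq_add_of_le' hr
  simp only [abarPsi_eq_mul_expNegDivIntegral, Nat.add_sub_cancel, Nat.factorial_succ]
  push_cast
  field_simp
  ring

theorem integral_deriv_psi_mul {r : ℕ} (hr : 1 ≤ r) {L : ℝ → ℝ} (h1 : Assumption1 L) {K K' : ℝ}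
    (hK : L =O[𝓝[>] (0 : ℝ)] fun x : ℝ => x ^ K) (hK' : L =O[atTop] fun x : ℝ => x ^ K')
    (hr' : K' < r) {Ω : ℝ} (hΩ : 0 < Ω) :
    ∫ x in Ioi 0, deriv (fun w => psi r x w) Ω * L x =
      r * (abarPsi r L Ω - abarPsi (r + 1) L Ω) / Ω := by
  calc ∫ x in Ioi 0, deriv (fun w => psi r x w) Ω * L x
      = ∫ x in Ioi 0, r / Ω * (psi r x Ω * L x - psi (r + 1) x Ω * L x) :=
        setIntegral_congr_fun measurableSet_Ioi fun x (hx : 0 < x) => by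
          rw [(hasDerivAt_psi hr hx.ne' hΩ.ne').deriv]; ring
    _ = r * (abarPsi r L Ω - abarPsi (r + 1) L Ω) / Ω := by
        rw [integral_const_mul, integral_sub (integrableOn_psi_mul h1 hK hK' hr' hΩ)
          (integrableOn_psi_mul h1 hK hK' (by push_cast; linarith) hΩ), abarPsi, abarPsi]
        ring

theorem contDiffOn_one_of_hasDerivAt {𝕜 F : Type*} [NontriviallyNormedField 𝕜]
    [NormedAddCommGroup F] [NormedSpace 𝕜 F] {f f' : 𝕜 → F} {s : Set 𝕜} (hs : IsOpen s)
    (hf : ∀ x ∈ s, HasDerivAt f (f' x) x) (hf' : ContinuousOn f' s) : ContDiffOn 𝕜 1 f s := by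
  rw [contDiffOn_one_iff_derivWithin hs.uniqueDiffOn]
  exact ⟨fun x hx => (hf x hx).differentiableAt.differentiableWithinAt,
    hf'.congr fun x hx => (hf x hx).hasDerivWithinAt.derivWithin (hs.uniqueDiffWithinAt hx)⟩

theorem stmt1_general (r : ℕ) (hr : 1 ≤ r) (L : ℝ → ℝ)
    (h1 : Assumption1 L) (h3 : Assumption3 r L) :
    ContDiffOn ℝ 1 (abarPsi r L) (Set.Ioi (0 : ℝ)) ∧
    ∀ Ω : ℝ, 0 < Ω →
      HasDerivAt (abarPsi r L)
        (∫ x in Set.Ioi (0 : ℝ), deriv (fun w : ℝ => psi r x w) Ω * L x) Ω ∧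
      (∫ x in Set.Ioi (0 : ℝ), deriv (fun w : ℝ => psi r x w) Ω * L x)
        = (r : ℝ) * (abarPsi r L Ω - abarPsi (r + 1) L Ω) / Ω := by
  obtain ⟨⟨K, hK⟩, K', hK'r, hK'⟩ := h3
  have hderiv : ∀ ρ : ℕ, r ≤ ρ → ∀ Ω ∈ Ioi (0 : ℝ),
      HasDerivAt (abarPsi ρ L) (ρ * (abarPsi ρ L Ω - abarPsi (ρ + 1) L Ω) / Ω) Ω :=
    fun ρ hρ _ hΩ => hasDerivAt_abarPsi (hr.trans hρ) h1 hK hK'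
      (hK'r.trans_le (by exact_mod_cast hρ)) hΩ
  have hcont : ∀ ρ : ℕ, r ≤ ρ → ContinuousOn (abarPsi ρ L) (Ioi 0) := fun ρ hρ Ω hΩ =>
    (hderiv ρ hρ Ω hΩ).continuousAt.continuousWithinAt
  refine ⟨contDiffOn_one_of_hasDerivAt isOpen_Ioi (hderiv r le_rfl) ?_, fun Ω hΩ => ?_⟩
  · exact (continuousOn_const.mul ((hcont r le_rfl).sub (hcont (r + 1) (by omega)))).div
      continuousOn_id fun _ hΩ => ne_of_gt hΩ
  · rw [integral_deriv_psi_mul hr h1 hK hK' hK'r hΩ]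
    exact ⟨hderiv r le_rfl Ω hΩ, rfl⟩

/-- Proposition 1: the asymptotic risk `η̄` is a `C¹` function of
`Ω` on `(0,∞)`, with `dη̄/dΩ = ∫₀^∞ (∂ψ/∂Ω)(x,Ω) L(x) dx`, and this derivative
equals `r (η̄|_r(Ω) − η̄|_{r+1}(Ω)) / Ω`. -/
theorem stmt1 (r : ℕ) (hr : 1 ≤ r) (L : ℝ → ℝ) (hL0 : ∀ x : ℝ, 0 ≤ L x)
    (h1 : Assumption1 L) (h2 : Assumption2' L) (h3 : Assumption3 r L) :
    ContDiffOn ℝ 1 (abarPsi r L) (Set.Ioi (0 : ℝ)) ∧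
    ∀ Ω : ℝ, 0 < Ω →
      HasDerivAt (abarPsi r L)
        (∫ x in Set.Ioi (0 : ℝ), deriv (fun w : ℝ => psi r x w) Ω * L x) Ω ∧
      (∫ x in Set.Ioi (0 : ℝ), deriv (fun w : ℝ => psi r x w) Ω * L x)
        = (r : ℝ) * (abarPsi r L Ω - abarPsi (r + 1) L Ω) / Ω :=
  stmt1_general r hr L h1 h3
end

section
/- Let r ∈ ℕ, r ≥ 3, and for p ∈ (0,1) let N be the inverse binomial sampling stopping variable with parameter r. Then the estimator p̂ = (r−2)/(N−1) satisfies E[(p̂ − p)²]/p² < 1/(r−1) for every p ∈ (0,1). -/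
open MeasureTheory Filter Set Topology
open scoped ENNReal BigOperators

/-- Proposition 5: for `r ≥ 3` the estimator `p̂ = (r−2)/(N−1)`
satisfies `E[(p̂ − p)²]/p² < 1/(r−1)` for every `p ∈ (0,1)`. -/
theorem stmt8 (r : ℕ) (hr : 3 ≤ r) :
    ∀ p ∈ Set.Ioo (0 : ℝ) 1,
      (∑' n : ℕ, fpmf r p (n + r) *
          (((r : ℝ) - 2) / (((n : ℝ) + (r : ℝ)) - 1) - p) ^ 2 / p ^ 2)
        < 1 / ((r : ℝ) - 1) := by
  obtain ⟨s, rfl⟩ : ∃ s, r = s + 3 := ⟨r - 3, by omega⟩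
  rintro p ⟨hp0, hp1⟩
  have hp0' : p ≠ 0 := ne_of_gt hp0
  set q : ℝ := 1 - p with hqdef
  have hq0 : 0 < q := by simp only [hqdef]; linarith
  have hqn : ‖q‖ < 1 := by
    rw [Real.norm_eq_abs, abs_lt]
    constructor <;> simp only [hqdef] <;> linarith
  have h1q : 1 - q = p := by simp [hqdef]
  -- base negative binomial sums
  have key : ∀ k : ℕ, HasSum (fun n : ℕ => ((n + k).choose k : ℝ) * (p ^ (k+1) * q ^ n)) 1 := by
    intro k
    have h := hasSum_choose_mul_geometric_of_norm_lt_one (𝕜 := ℝ) k hqn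
    rw [h1q] at h
    have h2 := h.mul_left (p ^ (k+1))
    have hv : p ^ (k+1) * (1 / (p ^ (k+1))) = 1 := by field_simp
    rw [hv] at h2
    have hfg : (fun n : ℕ => p ^ (k+1) * (((n + k).choose k : ℝ) * q ^ n))
        = fun n : ℕ => ((n + k).choose k : ℝ) * (p ^ (k+1) * q ^ n) := by
      funext n; ring
    rwa [hfg] at h2
  have h0 := key (s + 2)
  have h1 := key (s + 1)
  have h2 := key s
  -- rewrite fpmf
  have fpmf_eq : ∀ n : ℕ, fpmf (s + 3) p (n + (s + 3)) =
      ((n + (s + 2)).choose (s + 2) : ℝ) * (p ^ (s + 3) * q ^ n) := by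
    intro n
    have hfact : ((s + 2).factorial : ℝ) ≠ 0 := by
      exact_mod_cast (s + 2).factorial_ne_zero
    have hprod : (∏ i ∈ Finset.Icc 1 (s + 2), (((n + (s + 3) : ℕ) : ℝ) - (i : ℝ)))
        = ((n + (s + 2)).descFactorial (s + 2) : ℝ) := by
      rw [Nat.descFactorial_eq_prod_range, Nat.cast_prod,
        ← Finset.Ico_add_one_right_eq_Icc, Finset.prod_Ico_eq_prod_range]
      rw [show s + 2 + 1 - 1 = s + 2 from rfl]
      refine Finset.prod_congr rfl fun i hi => ?_
      simp only [Finset.mem_range] at hi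
      rw [Nat.cast_sub (by omega)]
      push_cast
      ring
    have hsub : n + (s + 3) - (s + 3) = n := by omega
    have hr1 : s + 3 - 1 = s + 2 := rfl
    simp only [fpmf, hr1, hsub, hprod, ← hqdef,
      Nat.descFactorial_eq_factorial_mul_choose]
    push_cast
    field_simp
  -- ratio identities
  have e1 : ∀ n : ℕ, ((n + (s + 2)).choose (s + 2) : ℝ) * ((s : ℝ) + 2)
      = ((n : ℝ) + (s : ℝ) + 2) * ((n + (s + 1)).choose (s + 1) : ℝ) := by
    intro n
    have h' : (n + (s + 1) + 1) * (n + (s + 1)).choose (s + 1)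
        = (n + (s + 2)).choose (s + 2) * (s + 2) := by
      have := Nat.add_one_mul_choose_eq (n + (s + 1)) (s + 1)
      simpa [Nat.succ_eq_add_one, add_assoc] using this
    have h2' : ((n : ℝ) + ((s : ℝ) + 1) + 1) * ((n + (s + 1)).choose (s + 1) : ℝ)
        = ((n + (s + 2)).choose (s + 2) : ℝ) * ((s : ℝ) + 2) := by
      exact_mod_cast h'
    linear_combination -h2'
  have e2 : ∀ n : ℕ, ((n + (s + 1)).choose (s + 1) : ℝ) * ((s : ℝ) + 1)
      = ((n : ℝ) + (s : ℝ) + 1) * ((n + s).choose s : ℝ) := by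
    intro n
    have h' : (n + s + 1) * (n + s).choose s
        = (n + (s + 1)).choose (s + 1) * (s + 1) := by
      have := Nat.add_one_mul_choose_eq (n + s) s
      simpa [Nat.succ_eq_add_one, add_assoc] using this
    have h2' : ((n : ℝ) + (s : ℝ) + 1) * ((n + s).choose s : ℝ)
        = ((n + (s + 1)).choose (s + 1) : ℝ) * ((s : ℝ) + 1) := by
      exact_mod_cast h'
    linear_combination -h2'
  have hs1 : (0:ℝ) < (s : ℝ) + 1 := by positivity
  have hs2 : (0:ℝ) < (s : ℝ) + 2 := by positivity
  -- the dominating series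
  set U : ℕ → ℝ := fun n =>
    ((s : ℝ) + 1) / ((s : ℝ) + 2) * (((n + s).choose s : ℝ) * (p ^ (s + 1) * q ^ n))
    - 2 * (((s : ℝ) + 1) / ((s : ℝ) + 2)) *
        (((n + (s + 1)).choose (s + 1) : ℝ) * (p ^ (s + 2) * q ^ n))
    + (((n + (s + 2)).choose (s + 2) : ℝ) * (p ^ (s + 3) * q ^ n)) with hUdef
  have hUsum : HasSum U (((s : ℝ) + 1) / ((s : ℝ) + 2) * 1
      - 2 * (((s : ℝ) + 1) / ((s : ℝ) + 2)) * 1 + 1) :=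
    ((h2.mul_left _).sub (h1.mul_left _)).add h0
  have hval : ((s : ℝ) + 1) / ((s : ℝ) + 2) * 1
      - 2 * (((s : ℝ) + 1) / ((s : ℝ) + 2)) * 1 + 1 = 1 / ((s : ℝ) + 2) := by
    field_simp
    ring
  rw [hval] at hUsum
  -- per-term strict bound
  have hlt : ∀ n : ℕ, fpmf (s + 3) p (n + (s + 3)) *
      ((((s + 3 : ℕ) : ℝ) - 2) / (((n : ℝ) + ((s + 3 : ℕ) : ℝ)) - 1) - p) ^ 2 / p ^ 2
      < U n := by
    intro n
    rw [fpmf_eq n]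
    have hm : (0:ℝ) < (n : ℝ) + (s : ℝ) + 2 := by positivity
    have hC0 : (0:ℝ) < ((n + s).choose s : ℝ) := by
      exact_mod_cast Nat.choose_pos (by omega)
    have hc2 : ((n + (s + 2)).choose (s + 2) : ℝ)
        = ((n : ℝ) + (s : ℝ) + 2) * ((n + (s + 1)).choose (s + 1) : ℝ) / ((s : ℝ) + 2) := by
      rw [eq_div_iff (ne_of_gt hs2)]
      linear_combination e1 n
    have hc1 : ((n + (s + 1)).choose (s + 1) : ℝ)
        = ((n : ℝ) + (s : ℝ) + 1) * ((n + s).choose s : ℝ) / ((s : ℝ) + 1) := by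
      rw [eq_div_iff (ne_of_gt hs1)]
      linear_combination e2 n
    have hcast1 : (((s + 3 : ℕ) : ℝ)) - 2 = (s : ℝ) + 1 := by push_cast; ring
    have hcast2 : (((n : ℝ) + ((s + 3 : ℕ) : ℝ)) - 1) = (n : ℝ) + (s : ℝ) + 2 := by
      push_cast; ring
    rw [hcast1, hcast2]
    have hdiff : U n - ((n + (s + 2)).choose (s + 2) : ℝ) * (p ^ (s + 3) * q ^ n) *
          (((s : ℝ) + 1) / ((n : ℝ) + (s : ℝ) + 2) - p) ^ 2 / p ^ 2
        = ((n + s).choose s : ℝ) * ((s : ℝ) + 1) ^ 2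
            / (((s : ℝ) + 1) * ((s : ℝ) + 2) * ((n : ℝ) + (s : ℝ) + 2))
            * (p ^ (s + 1) * q ^ n) := by
      rw [hUdef]
      simp only
      rw [hc2, hc1]
      field_simp
      ring
    have hpos : (0:ℝ) < ((n + s).choose s : ℝ) * ((s : ℝ) + 1) ^ 2
        / (((s : ℝ) + 1) * ((s : ℝ) + 2) * ((n : ℝ) + (s : ℝ) + 2))
        * (p ^ (s + 1) * q ^ n) := by positivity
    linarith [hdiff, hpos]
  have hnn : ∀ n : ℕ, 0 ≤ fpmf (s + 3) p (n + (s + 3)) *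
      ((((s + 3 : ℕ) : ℝ) - 2) / (((n : ℝ) + ((s + 3 : ℕ) : ℝ)) - 1) - p) ^ 2 / p ^ 2 := by
    intro n
    rw [fpmf_eq n]
    positivity
  have hfin := Summable.tsum_lt_tsum_of_nonneg hnn (fun n => (hlt n).le) (hlt 0) hUsum.summable
  rw [hUsum.tsum_eq] at hfin
  have : (1 : ℝ) / (((s + 3 : ℕ) : ℝ) - 1) = 1 / ((s : ℝ) + 2) := by
    push_cast; ring_nf
  rw [this]
  exact hfin
end
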